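/- Let X be a Banach space, let (x_n) be a bounded sequence in X, and let G be a subspace of the dual X* such that φ(x_n) → 0 as n → ∞ for every φ ∈ G. Then the set K_σ^+({x_n}) = {∑_{i=1}^∞ t_i x_i : 0 ≤ t_i ≤ 1 for all i, ∑_{i=1}^∞ t_i ≤ 1} (all series converging absolutely in norm) is compact in the topology σ(X,G), i.e. the coarsest topology on X making every functional φ ∈ G continuous. -/

import Mathlib

/-!
The coefficient set `subSimplex = {t ≥ 0 | every finite sum of t is ≤ 1}` is compact in the
product topology on `ℕ → ℝ`, and `K_σ^+({x_n})` is its image under `t ↦ ∑ tᵢ xᵢ`. Composed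
with `φ ∈ G` this map is `t ↦ ∑ tᵢ φ(xᵢ)`, which is continuous on `subSimplex` because
`φ(xᵢ) → 0`. So the map is σ(X,G)-continuous on a
compact set, and its image is σ(X,G)-compact.
-/

open Filter Topology

noncomputable section

/-- The σ-convex conical hull `K_σ^+({x_n})` of a sequence: all sums `∑ t_i x_i` with
`0 ≤ t_i ≤ 1` and `∑ t_i ≤ 1` (the series converging in norm). -/
def KplusSigma {X : Type*} [NormedAddCommGroup X] [NormedSpace ℝ X] (x : ℕ → X) : Set X :=
  {v | ∃ t : ℕ → ℝ, (∀ i, 0 ≤ t i) ∧ (∀ i, t i ≤ 1) ∧ Summable t ∧ (∑' i, t i) ≤ 1 ∧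
    HasSum (fun i => t i • x i) v}

/-- The topology σ(X,G) of pointwise convergence against the functionals of `G ⊆ X*`. -/
def sigmaTop {X : Type*} [NormedAddCommGroup X] [NormedSpace ℝ X]
    (G : Submodule ℝ (X →L[ℝ] ℝ)) : TopologicalSpace X :=
  TopologicalSpace.induced (fun x => fun φ : G => (φ : X →L[ℝ] ℝ) x) Pi.topologicalSpace

def subSimplex : Set (ℕ → ℝ) :=
  {t | (∀ i, 0 ≤ t i) ∧ ∀ s : Finset ℕ, ∑ i ∈ s, t i ≤ 1}

namespace subSimplex

variable {t : ℕ → ℝ}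

lemma le_one (ht : t ∈ subSimplex) (i : ℕ) : t i ≤ 1 := by
  simpa using ht.2 {i}

lemma summable (ht : t ∈ subSimplex) : Summable t :=
  summable_of_sum_range_le ht.1 fun n => ht.2 (Finset.range n)

lemma tsum_le_one (ht : t ∈ subSimplex) : ∑' i, t i ≤ 1 :=
  (summable ht).tsum_le_of_sum_range_le fun n => ht.2 (Finset.range n)

lemma shift_mem (ht : t ∈ subSimplex) (N : ℕ) : (fun i => t (i + N)) ∈ subSimplex := by
  refine ⟨fun i => ht.1 _, fun s => ?_⟩
  simpa [Finset.sum_map] using ht.2 (s.map (addRightEmbedding N))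

theorem isCompact : IsCompact subSimplex := by
  have hclosed : IsClosed subSimplex := by
    simp only [subSimplex, Set.ofPred_and, Set.ofPred_forall]
    exact (isClosed_iInter fun i => isClosed_le continuous_const (continuous_apply i)).inter
      (isClosed_iInter fun s => isClosed_le (continuous_finsetSum s fun i _ => continuous_apply i)
        continuous_const)
  refine (isCompact_univ_pi fun _ => isCompact_Icc (a := (0 : ℝ)) (b := 1)).of_isClosed_subset
    hclosed fun t ht i _ => ⟨ht.1 i, le_one ht i⟩

end subSimplex

section Series

variable {E : Type*} [NormedAddCommGroup E] [NormedSpace ℝ E] {t : ℕ → ℝ} {a : ℕ → E}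

lemma norm_tsum_smul_le_of_mem_subSimplex (ht : t ∈ subSimplex) {C : ℝ} (ha : ∀ i, ‖a i‖ ≤ C) :
    ‖∑' i, t i • a i‖ ≤ C := by
  have hC : 0 ≤ C := (norm_nonneg _).trans (ha 0)
  calc ‖∑' i, t i • a i‖ ≤ (∑' i, t i) * C :=
        tsum_of_norm_bounded ((subSimplex.summable ht).hasSum.mul_right C) fun i => by
          rw [norm_smul, Real.norm_of_nonneg (ht.1 i)]
          exact mul_le_mul_of_nonneg_left (ha i) (ht.1 i)
    _ ≤ C := mul_le_of_le_one_left hC (subSimplex.tsum_le_one ht)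

lemma summable_smul_of_mem_subSimplex [CompleteSpace E] (ht : t ∈ subSimplex) {C : ℝ}
    (ha : ∀ i, ‖a i‖ ≤ C) : Summable fun i => t i • a i :=
  ((subSimplex.summable ht).mul_right C).of_norm_bounded fun i => by
    rw [norm_smul, Real.norm_of_nonneg (ht.1 i)]
    exact mul_le_mul_of_nonneg_left (ha i) (ht.1 i)

/-- The partial sums converge uniformly on `subSimplex` because the tail after `N` is a
sub-convex combination of the `a i` with `i ≥ N`. -/
theorem continuousOn_tsum_smul_of_tendsto_zero [CompleteSpace E] (ha : Tendsto a atTop (𝓝 0)) :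
    ContinuousOn (fun t : ℕ → ℝ => ∑' i, t i • a i) subSimplex := by
  obtain ⟨C, hC⟩ := (Metric.isBounded_range_of_tendsto a ha).exists_norm_le
  have hunif : TendstoUniformlyOn (fun N t => ∑ i ∈ Finset.range N, t i • a i)
      (fun t => ∑' i, t i • a i) atTop subSimplex := by
    rw [Metric.tendstoUniformlyOn_iff]
    intro ε hε
    obtain ⟨N₀, hN₀⟩ := Metric.tendsto_atTop.1 ha (ε / 2) (half_pos hε)
    filter_upwards [eventually_ge_atTop N₀] with N hN t ht
    have htail : ‖∑' i, t (i + N) • a (i + N)‖ ≤ ε / 2 :=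
      norm_tsum_smul_le_of_mem_subSimplex (subSimplex.shift_mem ht N) fun i => by
        simpa using (hN₀ (i + N) (by omega)).le
    have hsum := summable_smul_of_mem_subSimplex ht fun i => hC _ ⟨i, rfl⟩
    rw [dist_eq_norm, ← hsum.sum_add_tsum_nat_add N, add_sub_cancel_left]
    linarith
  refine hunif.continuousOn (Eventually.of_forall fun N => ?_).frequently
  exact (continuous_finsetSum _ fun i _ => (continuous_apply i).smul continuous_const).continuousOn

end Series

lemma kplusSigma_eq_image {X : Type*} [NormedAddCommGroup X] [NormedSpace ℝ X] [CompleteSpace X]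
    {x : ℕ → X} {C : ℝ} (hC : ∀ i, ‖x i‖ ≤ C) :
    KplusSigma x = (fun t => ∑' i, t i • x i) '' subSimplex := by
  ext v
  constructor
  · rintro ⟨t, h0, -, hs, hle, hv⟩
    exact ⟨t, ⟨h0, fun s => (hs.sum_le_tsum s fun i _ => h0 i).trans hle⟩, hv.tsum_eq⟩
  · rintro ⟨t, ht, rfl⟩
    exact ⟨t, ht.1, subSimplex.le_one ht, subSimplex.summable ht, subSimplex.tsum_le_one ht,
      (summable_smul_of_mem_subSimplex ht hC).hasSum⟩

lemma isCompact_sigmaTop_image {X α : Type*} [NormedAddCommGroup X] [NormedSpace ℝ X]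
    [TopologicalSpace α] {G : Submodule ℝ (X →L[ℝ] ℝ)} {K : Set α} (hK : IsCompact K)
    {f : α → X} (hf : ∀ φ ∈ G, ContinuousOn (fun a => φ (f a)) K) :
    @IsCompact X (sigmaTop G) (f '' K) := by
  let := sigmaTop G
  refine hK.image_of_continuousOn (continuousOn_iff_continuous_domRestrict.2 ?_)
  exact continuous_induced_rng.2 (continuous_pi fun φ => (hf φ φ.2).domRestrict)

/-- if `(x_n)` is bounded and `φ(x_n) → 0` for every `φ ∈ G`, then
`K_σ^+({x_n})` is σ(X,G)-compact. -/
theorem stmt12 {X : Type*} [NormedAddCommGroup X] [NormedSpace ℝ X] [CompleteSpace X]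
    (x : ℕ → X) (hbdd : Bornology.IsBounded (Set.range x))
    (G : Submodule ℝ (X →L[ℝ] ℝ))
    (hG0 : ∀ φ ∈ G, Tendsto (fun n => φ (x n)) atTop (𝓝 (0:ℝ))) :
    @IsCompact X (sigmaTop G) (KplusSigma x) := by
  obtain ⟨C, hC⟩ := hbdd.exists_norm_le
  have hxC : ∀ i, ‖x i‖ ≤ C := fun i => hC _ ⟨i, rfl⟩
  rw [kplusSigma_eq_image hxC]
  refine isCompact_sigmaTop_image subSimplex.isCompact fun φ hφ => ?_
  refine (continuousOn_tsum_smul_of_tendsto_zero (hG0 φ hφ)).congr fun t ht => ?_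
  simp only [φ.map_tsum (summable_smul_of_mem_subSimplex ht hxC), map_smul]
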